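/- With propositional HT-satisfaction as defined, for any formulas F and G, the formula (F ∧ ¬¬G) → G is HT-equivalent to F → (G ∨ ¬G); that is, every HT-interpretation ⟨S,S'⟩ satisfies (F ∧ ¬¬G) → G if and only if it satisfies F → (G ∨ ¬G). Here ¬H abbreviates H → ⊥. -/
import Mathlib


/-- Propositional formulas over a set of atoms `α`. -/
inductive PForm (α : Type) where
  | atom : α → PForm α
  | fls : PForm α
  | tru : PForm α
  | conj : PForm α → PForm α → PForm α
  | disj : PForm α → PForm α → PForm α
  | impl : PForm α → PForm α → PForm α

/-- Classical satisfaction of a formula by a set of atoms. -/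
def clSat {α : Type} (S : Set α) : PForm α → Prop
  | .atom a => a ∈ S
  | .fls => False
  | .tru => True
  | .conj F G => clSat S F ∧ clSat S G
  | .disj F G => clSat S F ∨ clSat S G
  | .impl F G => clSat S F → clSat S G

/-- HT-satisfaction by a pair ⟨S, S'⟩. -/
def htSat {α : Type} (S S' : Set α) : PForm α → Prop
  | .atom a => a ∈ S
  | .fls => False
  | .tru => True
  | .conj F G => htSat S S' F ∧ htSat S S' G
  | .disj F G => htSat S S' F ∨ htSat S S' G
  | .impl F G => (clSat S' F → clSat S' G) ∧ (¬ htSat S S' F ∨ htSat S S' G)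

/-- ¬H abbreviates H → ⊥. -/
def PForm.neg {α : Type} (F : PForm α) : PForm α := PForm.impl F PForm.fls


lemma ht_persist {α : Type} (S S' : Set α) (hsub : S ⊆ S') :
    ∀ H : PForm α, htSat S S' H → clSat S' H := by
  intro H
  induction H with
  | atom a => exact fun h => hsub h
  | fls => exact id
  | tru => exact id
  | conj F G ihF ihG => exact fun h => ⟨ihF h.1, ihG h.2⟩
  | disj F G ihF ihG => exact fun h => h.elim (fun x => Or.inl (ihF x)) (fun x => Or.inr (ihG x))
  | impl F G ihF ihG => exact fun h => h.1

theorem ht_choice_equiv {α : Type} (F G : PForm α) (S S' : Set α) (hsub : S ⊆ S') :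
    htSat S S' (PForm.impl (PForm.conj F (PForm.neg (PForm.neg G))) G) ↔
      htSat S S' (PForm.impl F (PForm.disj G (PForm.neg G))) := by
  have pF := ht_persist S S' hsub F
  have pG := ht_persist S S' hsub G
  simp only [htSat, clSat, PForm.neg] at *
  tauto
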